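/- Let 0 < p₁, p₂ < ∞, ϱ = min(1, p₁/p₂), s₁ ∈ ℝ, φ₁ ∈ 𝒢_{p₁}, φ₂ ∈ 𝒢_{p₂} with φ₁(1) = φ₂(1) = 1, and suppose there is c > 0 with φ₂(t) ≥ c φ₁(t)^ϱ for all t ∈ (0,1). Define σ(s₁) = sup{ s : sup_j 2^{j(s−s₁)} φ₁(2^{-j})^{ϱ−1} < ∞ } and σ̄(s₁) = sup{ s : sup_j 2^{j(s−σ(s₁))} φ₂(2^{-j})/φ₁(2^{-j})^ϱ < ∞ }. Then s₁ − d/p₁ ≤ σ̄(s₁) ≤ σ(s₁) ≤ s₁. -/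

import Mathlib

def inG (d : ℕ) (p : ℝ) (φ : ℝ → ℝ) : Prop :=
  (∀ t : ℝ, 0 < t → 0 < φ t) ∧
  (∀ t s : ℝ, 0 < t → t ≤ s → φ t ≤ φ s) ∧
  (∀ t s : ℝ, 0 < t → t ≤ s → s ^ (-(d : ℝ) / p) * φ s ≤ t ^ (-(d : ℝ) / p) * φ t)

/-!
Write `D = d/p₁` and `ψᵢ(j) = φᵢ(2⁻ʲ)`. Membership in `𝒢_{p₁}` with `φ₁(1) = 1` gives
`2^{-jD} ≤ ψ₁(j) ≤ 1`. Both suprema are critical exponents of sequences `2^{j(s-a)} g(j)` with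
`m ≤ g(j) ≤ 2^{jb}` for some `m > 0`, and such an exponent lies in `[a - b, a]`. For `σ` one takes
`g = ψ₁^{ϱ-1}`, `m = 1`, `b = (1-ϱ)D`; for `σ̄`, `g = ψ₂/ψ₁^ϱ`, `m = min c 1`, `b = ϱD`.
Adding the two lower bounds gives `σ̄ ≥ s₁ - D`.
-/

open Set

lemma nonpos_of_forall_two_rpow_nat_mul_le {b C : ℝ} (h : ∀ j : ℕ, (2 : ℝ) ^ ((j : ℝ) * b) ≤ C) :
    b ≤ 0 := by
  by_contra! hb
  obtain ⟨n, hn⟩ := exists_nat_gt (C / (b * Real.log 2))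
  have hlog : 0 < Real.log 2 := Real.log_pos one_lt_two
  have hexp : Real.log 2 * ((n : ℝ) * b) + 1 ≤ (2 : ℝ) ^ ((n : ℝ) * b) := by
    rw [Real.rpow_def_of_pos two_pos]
    exact Real.add_one_le_exp _
  rw [div_lt_iff₀ (by positivity)] at hn
  nlinarith [h n]

lemma sSup_setOf_two_rpow_mul_bdd_mem_Icc {a b m : ℝ} {g : ℕ → ℝ} (hm : 0 < m) (hlow : ∀ j, m ≤ g j)
    (hup : ∀ j : ℕ, g j ≤ (2 : ℝ) ^ ((j : ℝ) * b)) :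
    sSup {s : ℝ | ∃ C : ℝ, ∀ j : ℕ, (2 : ℝ) ^ ((j : ℝ) * (s - a)) * g j ≤ C} ∈ Icc (a - b) a := by
  set S := {s : ℝ | ∃ C : ℝ, ∀ j : ℕ, (2 : ℝ) ^ ((j : ℝ) * (s - a)) * g j ≤ C}
  have hmem : a - b ∈ S := ⟨1, fun j => calc
    (2 : ℝ) ^ ((j : ℝ) * (a - b - a)) * g j
        ≤ (2 : ℝ) ^ ((j : ℝ) * (a - b - a)) * (2 : ℝ) ^ ((j : ℝ) * b) := by gcongr; exact hup j
    _ = 1 := by rw [← Real.rpow_add two_pos]; ring_nf; exact Real.rpow_zero 2⟩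
  have hub : ∀ s ∈ S, s ≤ a := by
    rintro s ⟨C, hC⟩
    suffices ∀ j : ℕ, (2 : ℝ) ^ ((j : ℝ) * (s - a)) ≤ C / m by
      linarith [nonpos_of_forall_two_rpow_nat_mul_le this]
    intro j
    rw [le_div_iff₀ hm]
    calc (2 : ℝ) ^ ((j : ℝ) * (s - a)) * m ≤ (2 : ℝ) ^ ((j : ℝ) * (s - a)) * g j := by
          gcongr; exact hlow j
      _ ≤ C := hC j
  exact ⟨le_csSup ⟨a, hub⟩ hmem, csSup_le ⟨_, hmem⟩ hub⟩

lemma two_rpow_neg_nat_pos (j : ℕ) : 0 < (2 : ℝ) ^ (-(j : ℝ)) :=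
  Real.rpow_pos_of_pos two_pos _

lemma two_rpow_neg_nat_le_one (j : ℕ) : (2 : ℝ) ^ (-(j : ℝ)) ≤ 1 :=
  Real.rpow_le_one_of_one_le_of_nonpos one_le_two (by simp)

namespace inG

variable {d : ℕ} {p : ℝ} {φ : ℝ → ℝ}

lemma le_one (h : inG d p φ) (h1 : φ 1 = 1) {t : ℝ} (ht : 0 < t) (ht1 : t ≤ 1) : φ t ≤ 1 :=
  h1 ▸ h.2.1 t 1 ht ht1

lemma rpow_le (h : inG d p φ) (h1 : φ 1 = 1) {t : ℝ} (ht : 0 < t) (ht1 : t ≤ 1) :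
    t ^ ((d : ℝ) / p) ≤ φ t := by
  have key := h.2.2 t 1 ht ht1
  rwa [Real.one_rpow, one_mul, h1, neg_div, Real.rpow_neg ht.le, inv_mul_eq_div,
    one_le_div (Real.rpow_pos_of_pos ht _)] at key

lemma two_rpow_le_apply_dyadic (h : inG d p φ) (h1 : φ 1 = 1) (j : ℕ) :
    (2 : ℝ) ^ (-((j : ℝ) * (d / p))) ≤ φ ((2 : ℝ) ^ (-(j : ℝ))) := by
  have key := h.rpow_le h1 (two_rpow_neg_nat_pos j) (two_rpow_neg_nat_le_one j)
  rwa [← Real.rpow_mul zero_le_two, neg_mul] at key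

lemma one_le_apply_dyadic_rpow (h : inG d p φ) (h1 : φ 1 = 1) {q : ℝ} (hq : q ≤ 0) (j : ℕ) :
    1 ≤ φ ((2 : ℝ) ^ (-(j : ℝ))) ^ q :=
  Real.one_le_rpow_of_pos_of_le_one_of_nonpos (h.1 _ (two_rpow_neg_nat_pos j))
    (h.le_one h1 (two_rpow_neg_nat_pos j) (two_rpow_neg_nat_le_one j)) hq

lemma apply_dyadic_rpow_le (h : inG d p φ) (h1 : φ 1 = 1) {q : ℝ} (hq : q ≤ 0) (j : ℕ) :
    φ ((2 : ℝ) ^ (-(j : ℝ))) ^ q ≤ (2 : ℝ) ^ ((j : ℝ) * (-q * (d / p))) := calc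
  φ ((2 : ℝ) ^ (-(j : ℝ))) ^ q ≤ ((2 : ℝ) ^ (-((j : ℝ) * (d / p)))) ^ q :=
    Real.rpow_le_rpow_of_nonpos (Real.rpow_pos_of_pos two_pos _)
      (h.two_rpow_le_apply_dyadic h1 j) hq
  _ = (2 : ℝ) ^ ((j : ℝ) * (-q * (d / p))) := by rw [← Real.rpow_mul zero_le_two]; ring_nf

lemma two_rpow_le_apply_dyadic_rpow (h : inG d p φ) (h1 : φ 1 = 1) {q : ℝ} (hq : 0 ≤ q)
    (j : ℕ) : (2 : ℝ) ^ (-((j : ℝ) * (q * (d / p)))) ≤ φ ((2 : ℝ) ^ (-(j : ℝ))) ^ q := calc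
  (2 : ℝ) ^ (-((j : ℝ) * (q * (d / p)))) = ((2 : ℝ) ^ (-((j : ℝ) * (d / p)))) ^ q := by
    rw [← Real.rpow_mul zero_le_two]; ring_nf
  _ ≤ φ ((2 : ℝ) ^ (-(j : ℝ))) ^ q :=
    Real.rpow_le_rpow (Real.rpow_nonneg zero_le_two _) (h.two_rpow_le_apply_dyadic h1 j) hq

end inG

section Ratio

variable {d d' : ℕ} {p p' ϱ : ℝ} {φ ψ : ℝ → ℝ}

lemma div_rpow_apply_dyadic_le (hφ : inG d p φ) (hψ : inG d' p' ψ) (hφ1 : φ 1 = 1)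
    (hψ1 : ψ 1 = 1) (hϱ : 0 ≤ ϱ) (j : ℕ) :
    ψ ((2 : ℝ) ^ (-(j : ℝ))) / φ ((2 : ℝ) ^ (-(j : ℝ))) ^ ϱ ≤
      (2 : ℝ) ^ ((j : ℝ) * (ϱ * (d / p))) := by
  rw [div_le_iff₀ (Real.rpow_pos_of_pos (hφ.1 _ (two_rpow_neg_nat_pos j)) _)]
  calc ψ ((2 : ℝ) ^ (-(j : ℝ))) ≤ 1 :=
        hψ.le_one hψ1 (two_rpow_neg_nat_pos j) (two_rpow_neg_nat_le_one j)
    _ = (2 : ℝ) ^ ((j : ℝ) * (ϱ * (d / p))) * (2 : ℝ) ^ (-((j : ℝ) * (ϱ * (d / p)))) := by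
        rw [← Real.rpow_add two_pos, add_neg_cancel, Real.rpow_zero]
    _ ≤ _ := by gcongr; exact hφ.two_rpow_le_apply_dyadic_rpow hφ1 hϱ j

lemma min_le_div_rpow_apply_dyadic {c : ℝ} (hφ : ∀ t, 0 < t → 0 < φ t) (hφ1 : φ 1 = 1)
    (hψ1 : ψ 1 = 1) (hc : ∀ t : ℝ, 0 < t → t < 1 → c * φ t ^ ϱ ≤ ψ t) (j : ℕ) :
    min c 1 ≤ ψ ((2 : ℝ) ^ (-(j : ℝ))) / φ ((2 : ℝ) ^ (-(j : ℝ))) ^ ϱ := by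
  have hφϱ := Real.rpow_pos_of_pos (hφ _ (two_rpow_neg_nat_pos j)) ϱ
  rw [le_div_iff₀ hφϱ]
  rcases Nat.eq_zero_or_pos j with rfl | hj
  · simp [hφ1, hψ1]
  · calc min c 1 * φ ((2 : ℝ) ^ (-(j : ℝ))) ^ ϱ ≤ c * φ ((2 : ℝ) ^ (-(j : ℝ))) ^ ϱ := by
          gcongr; exact min_le_left c 1
      _ ≤ ψ ((2 : ℝ) ^ (-(j : ℝ))) :=
          hc _ (two_rpow_neg_nat_pos j) (Real.rpow_lt_one_of_one_lt_of_neg one_lt_two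
            (neg_neg_of_pos (Nat.cast_pos.mpr hj)))

end Ratio

theorem stmt_14 (d : ℕ) (p₁ p₂ s₁ ϱ : ℝ) (hp₁ : 0 < p₁) (hp₂ : 0 < p₂)
    (hϱ : ϱ = min 1 (p₁ / p₂))
    (φ₁ φ₂ : ℝ → ℝ) (h₁ : inG d p₁ φ₁) (h₂ : inG d p₂ φ₂)
    (hφ₁1 : φ₁ 1 = 1) (hφ₂1 : φ₂ 1 = 1)
    (hc : ∃ c : ℝ, 0 < c ∧ ∀ t : ℝ, 0 < t → t < 1 → c * φ₁ t ^ ϱ ≤ φ₂ t) :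
    let σ : ℝ := sSup {s : ℝ | ∃ C : ℝ, ∀ j : ℕ,
      (2 : ℝ) ^ ((j : ℝ) * (s - s₁)) * φ₁ ((2 : ℝ) ^ (-(j : ℝ))) ^ (ϱ - 1) ≤ C}
    let σb : ℝ := sSup {s : ℝ | ∃ C : ℝ, ∀ j : ℕ,
      (2 : ℝ) ^ ((j : ℝ) * (s - σ)) *
        (φ₂ ((2 : ℝ) ^ (-(j : ℝ))) / φ₁ ((2 : ℝ) ^ (-(j : ℝ))) ^ ϱ) ≤ C}
    s₁ - (d : ℝ) / p₁ ≤ σb ∧ σb ≤ σ ∧ σ ≤ s₁ := by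
  intro σ σb
  obtain ⟨c, hcpos, hcle⟩ := hc
  have hϱ0 : 0 ≤ ϱ := hϱ ▸ le_min zero_le_one (div_nonneg hp₁.le hp₂.le)
  have hϱ1 : ϱ ≤ 1 := hϱ ▸ min_le_left _ _
  have hσ : σ ∈ Icc (s₁ - -(ϱ - 1) * (d / p₁)) s₁ :=
    sSup_setOf_two_rpow_mul_bdd_mem_Icc one_pos (h₁.one_le_apply_dyadic_rpow hφ₁1 (by linarith))
      (h₁.apply_dyadic_rpow_le hφ₁1 (by linarith))
  have hσb : σb ∈ Icc (σ - ϱ * (d / p₁)) σ :=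
    sSup_setOf_two_rpow_mul_bdd_mem_Icc (lt_min hcpos one_pos)
      (min_le_div_rpow_apply_dyadic h₁.1 hφ₁1 hφ₂1 hcle)
      (div_rpow_apply_dyadic_le h₁ h₂ hφ₁1 hφ₂1 hϱ0)
  exact ⟨by linarith [hσ.1, hσb.1], hσb.2, hσ.2⟩
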